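/- arXiv:0907.0509 — 2 statements merged into one kernel-verified Lean document; each statement's English description precedes it below -/
import Mathlib

section
/- Let (Ω, G, Q) be a probability space, G_{j-1} ⊆ G_j ⊆ G sub-σ-fields, δ > 0, A ≥ 0, X an integrable random variable, and X_j an integrable random variable with E[X_j | G_{j-1}] = E[X_j | G_j] a.s. and E[e^{δ|X − X_j|} | G_{j-1}] ≤ A a.s. Set D_j = E[X | G_j] − E[X | G_{j-1}]. Then E[e^{δ|D_j|} | G_{j-1}] ≤ A² almost surely. -/
/-!
Write `Y = X - Xj`. Since `Xj` has the same conditional expectation given `m1` and `m2`,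
`D = μ[Y|m2] - μ[Y|m1]`, hence `exp (δ|D|) ≤ exp (δ|μ[Y|m2]|) * exp (δ|μ[Y|m1]|)`.
Conditional Jensen for the convex function `t ↦ exp (δ|t|)` bounds the factors by
`μ[exp (δ|Y|)|m2]` and `μ[exp (δ|Y|)|m1] ≤ A`. So `exp (δ|D|) ≤ A * μ[exp (δ|Y|)|m2]`, whose
conditional expectation given `m1` is, by the tower property, `A * μ[exp (δ|Y|)|m1] ≤ A ^ 2`.
-/

open MeasureTheory

theorem Real.convexOn_exp_mul_abs {δ : ℝ} (hδ : 0 ≤ δ) :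
    ConvexOn ℝ Set.univ fun t : ℝ => Real.exp (δ * |t|) := by
  have hdist : ConvexOn ℝ Set.univ fun t : ℝ => δ * |t| :=
    (convexOn_norm convex_univ).smul hδ
  have himage : Convex ℝ ((fun t : ℝ => δ * |t|) '' Set.univ) :=
    (isPreconnected_univ.image _ (by fun_prop : Continuous _).continuousOn).ordConnected.convex
  exact (convexOn_exp.subset (Set.subset_univ _) himage).comp hdist
    (Real.exp_monotone.monotoneOn _)

theorem Real.exp_mul_abs_sub_le {δ : ℝ} (hδ : 0 ≤ δ) (a b : ℝ) :
    Real.exp (δ * |a - b|) ≤ Real.exp (δ * |a|) * Real.exp (δ * |b|) := by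
  rw [← Real.exp_add, ← mul_add]
  gcongr
  exact abs_sub a b

namespace MeasureTheory

variable {Ω : Type*} {m m0 : MeasurableSpace Ω} {μ : Measure Ω}

theorem condExp_mono_of_nonneg {f g : Ω → ℝ} (hf_nonneg : 0 ≤ᵐ[μ] f)
    (hf : AEStronglyMeasurable f μ) (hg : Integrable g μ) (hfg : f ≤ᵐ[μ] g) :
    μ[f|m] ≤ᵐ[μ] μ[g|m] := by
  refine condExp_mono (hg.mono' hf ?_) hg hfg
  filter_upwards [hf_nonneg, hfg] with ω h0 hle
  rwa [Real.norm_of_nonneg h0]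

theorem exp_mul_abs_condExp_le_condExp (hm : m ≤ m0) [SigmaFinite (μ.trim hm)]
    {δ : ℝ} (hδ : 0 ≤ δ) {Y : Ω → ℝ} (hY : Integrable Y μ)
    (hexp : Integrable (fun ω => Real.exp (δ * |Y ω|)) μ) :
    (fun ω => Real.exp (δ * |μ[Y|m] ω|)) ≤ᵐ[μ] μ[fun ω => Real.exp (δ * |Y ω|)|m] :=
  (Real.convexOn_exp_mul_abs hδ).map_condExp_le_of_finiteDimensional hm hY hexp

end MeasureTheory

theorem condexp_exp_abs_martingale_diff {Ω : Type*} {m0 : MeasurableSpace Ω}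
    (μ : Measure Ω) [IsProbabilityMeasure μ]
    (m1 m2 : MeasurableSpace Ω) (h12 : m1 ≤ m2) (h20 : m2 ≤ m0)
    (δ : ℝ) (hδ : 0 < δ) (A : ℝ) (hA : 0 ≤ A)
    (X Xj : Ω → ℝ) (hX : Integrable X μ) (hXj : Integrable Xj μ)
    (hmart : μ[Xj|m1] =ᵐ[μ] μ[Xj|m2])
    (hexpint : Integrable (fun ω => Real.exp (δ * |X ω - Xj ω|)) μ)
    (hbound : μ[fun ω => Real.exp (δ * |X ω - Xj ω|)|m1] ≤ᵐ[μ] fun _ => A) :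
    μ[fun ω => Real.exp (δ * |(μ[X|m2]) ω - (μ[X|m1]) ω|)|m1] ≤ᵐ[μ] fun _ => A ^ 2 := by
  set U := μ[fun ω => Real.exp (δ * |X ω - Xj ω|)|m2]
  have hY : Integrable (X - Xj) μ := hX.sub hXj
  have hdiff : μ[X|m2] - μ[X|m1] =ᵐ[μ] μ[X - Xj|m2] - μ[X - Xj|m1] := by
    filter_upwards [condExp_sub hX hXj m2, condExp_sub hX hXj m1, hmart] with ω h2 h1 hj
    simp only [Pi.sub_apply, h2, h1, hj]
    ring
  have hpointwise : (fun ω => Real.exp (δ * |(μ[X|m2]) ω - (μ[X|m1]) ω|))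
      ≤ᵐ[μ] fun ω => A * U ω := by
    filter_upwards [hdiff, exp_mul_abs_condExp_le_condExp h20 hδ.le hY hexpint,
      exp_mul_abs_condExp_le_condExp (h12.trans h20) hδ.le hY hexpint, hbound]
      with ω hω h2 h1 hb
    rw [Pi.sub_apply] at hω
    rw [hω, mul_comm A]
    exact (Real.exp_mul_abs_sub_le hδ.le _ _).trans
      (mul_le_mul h2 (h1.trans hb) (Real.exp_nonneg _) ((Real.exp_nonneg _).trans h2))
  calc μ[fun ω => Real.exp (δ * |(μ[X|m2]) ω - (μ[X|m1]) ω|)|m1]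
      ≤ᵐ[μ] μ[A • U|m1] :=
        condExp_mono_of_nonneg (.of_forall fun _ => Real.exp_nonneg _)
          ((by fun_prop : Continuous fun t : ℝ => Real.exp (δ * |t|)).comp_aestronglyMeasurable
            (integrable_condExp.sub integrable_condExp).1)
          (integrable_condExp.smul A) hpointwise
    _ =ᵐ[μ] A • μ[fun ω => Real.exp (δ * |X ω - Xj ω|)|m1] :=
        (condExp_smul A U m1).trans ((condExp_condExp_of_le h12 h20).const_smul A)
    _ ≤ᵐ[μ] fun _ => A ^ 2 := by
        filter_upwards [hbound] with ω hb
        rw [Pi.smul_apply, smul_eq_mul, sq]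
        exact mul_le_mul_of_nonneg_left hb hA
end

section
/- Let (Ω, G, Q) be a probability space, G' ⊆ G a sub-σ-field, B > 0, δ > 0, and D a random variable with E[D | G'] = 0 a.s. and E[|D|²·e^{δ|D|/2} | G'] ≤ 2B a.s. Then for every α with |α| ≤ δ/2, E[e^{αD} | G'] ≤ e^{Bα²} almost surely. -/
/-!
Comparing power series termwise gives `exp x ≤ 1 + x + x² / 2 · exp |x|`. With `x = α D` and
`|α| ≤ δ / 2` the last term is at most `α² / 2 · |D|² exp (δ |D| / 2)`. Taking conditional
expectations, the linear term vanishes by centering and the quadratic one is at most `B α²`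
by the moment bound, so `E[exp (α D) | G'] ≤ 1 + B α² ≤ exp (B α²)`.
-/

open MeasureTheory Filter Nat

namespace Real

theorem pow_add_two_div_factorial_le (x : ℝ) (n : ℕ) :
    x ^ (n + 2) / (n + 2)! ≤ x ^ 2 / 2 * (|x| ^ n / n !) := by
  have hfact : (n ! * 2 : ℝ) ≤ (n + 2)! := by
    exact_mod_cast Nat.le_of_dvd (factorial_pos _) (factorial_mul_factorial_dvd_factorial_add n 2)
  calc x ^ (n + 2) / (n + 2)! ≤ |x| ^ (n + 2) / (n + 2)! := by
        gcongr ?_ / _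
        exact (le_abs_self _).trans (abs_pow x _).le
    _ ≤ |x| ^ (n + 2) / (n ! * 2) := by gcongr
    _ = x ^ 2 / 2 * (|x| ^ n / n !) := by
        rw [pow_add, sq_abs]
        field_simp

theorem exp_le_one_add_add_sq_div_two_mul_exp_abs (x : ℝ) :
    exp x ≤ 1 + x + x ^ 2 / 2 * exp |x| := by
  have hexp (y : ℝ) : HasSum (fun n : ℕ => y ^ n / n !) (exp y) := by
    rw [exp_eq_exp_ℝ]
    exact NormedSpace.expSeries_div_hasSum_exp y
  have htail : HasSum (fun n : ℕ => x ^ (n + 2) / (n + 2)!) (exp x - (1 + x)) := by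
    simpa [Finset.sum_range_succ] using (hasSum_nat_add_iff' 2).mpr (hexp x)
  have := hasSum_le (pow_add_two_div_factorial_le x) htail ((hexp |x|).mul_left (x ^ 2 / 2))
  linarith

theorem exp_mul_le_of_abs_le_half {α δ : ℝ} (hα : |α| ≤ δ / 2) (d : ℝ) :
    exp (α * d) ≤ 1 + α * d + α ^ 2 / 2 * (|d| ^ 2 * exp (δ * |d| / 2)) := by
  have hexp : exp |α * d| ≤ exp (δ * |d| / 2) := by
    rw [exp_le_exp, abs_mul]
    nlinarith [abs_nonneg d]
  calc exp (α * d) ≤ 1 + α * d + (α * d) ^ 2 / 2 * exp |α * d| :=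
        exp_le_one_add_add_sq_div_two_mul_exp_abs _
    _ ≤ 1 + α * d + (α * d) ^ 2 / 2 * exp (δ * |d| / 2) := by gcongr
    _ = 1 + α * d + α ^ 2 / 2 * (|d| ^ 2 * exp (δ * |d| / 2)) := by
        rw [sq_abs]
        ring

end Real

theorem condExp_const_add_mul_add_mul {Ω : Type*} {m m0 : MeasurableSpace Ω} {μ : Measure Ω}
    [IsFiniteMeasure μ] (hm : m ≤ m0) (c a b : ℝ) {f g : Ω → ℝ} (hf : Integrable f μ)
    (hg : Integrable g μ) :
    μ[fun ω => c + a * f ω + b * g ω|m] =ᵐ[μ]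
      fun ω => c + a * μ[f|m] ω + b * μ[g|m] ω := by
  have hcf : Integrable (fun ω => c + a * f ω) μ := (integrable_const c).add (hf.const_mul a)
  have hsum : μ[fun ω => c + a * f ω + b * g ω|m] =ᵐ[μ]
      μ[fun ω => c + a * f ω|m] + μ[fun ω => b * g ω|m] := condExp_add hcf (hg.const_mul b) m
  have hcf' : μ[fun ω => c + a * f ω|m] =ᵐ[μ] μ[fun _ => c|m] + μ[fun ω => a * f ω|m] :=
    condExp_add (integrable_const c) (hf.const_mul a) m
  have haf : μ[fun ω => a * f ω|m] =ᵐ[μ] a • μ[f|m] := condExp_smul a f m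
  have hbg : μ[fun ω => b * g ω|m] =ᵐ[μ] b • μ[g|m] := condExp_smul b g m
  filter_upwards [hsum, hcf', haf, hbg] with ω hsum hcf' haf hbg
  simp only [Pi.add_apply, Pi.smul_apply, smul_eq_mul] at hsum hcf' haf hbg
  rw [hsum, hcf', haf, hbg, condExp_const hm c]

theorem condexp_mgf_bound_general {Ω : Type*} {m0 : MeasurableSpace Ω}
    (μ : Measure Ω) [IsProbabilityMeasure μ]
    (m' : MeasurableSpace Ω) (hm' : m' ≤ m0)
    (B δ : ℝ)
    (D : Ω → ℝ) (hD : Integrable D μ)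
    (hcentered : μ[D|m'] =ᵐ[μ] fun _ => (0 : ℝ))
    (hint2 : Integrable (fun ω => |D ω| ^ 2 * Real.exp (δ * |D ω| / 2)) μ)
    (hbound : μ[fun ω => |D ω| ^ 2 * Real.exp (δ * |D ω| / 2)|m'] ≤ᵐ[μ] fun _ => 2 * B)
    (α : ℝ) (hα : |α| ≤ δ / 2)
    (hintα : Integrable (fun ω => Real.exp (α * D ω)) μ) :
    μ[fun ω => Real.exp (α * D ω)|m'] ≤ᵐ[μ] fun _ => Real.exp (B * α ^ 2) := by
  set g : Ω → ℝ := fun ω => |D ω| ^ 2 * Real.exp (δ * |D ω| / 2)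
  have hmajor : Integrable (fun ω => 1 + α * D ω + α ^ 2 / 2 * g ω) μ :=
    ((integrable_const 1).add (hD.const_mul α)).add (hint2.const_mul _)
  have hpointwise :
      (fun ω => Real.exp (α * D ω)) ≤ᵐ[μ] fun ω => 1 + α * D ω + α ^ 2 / 2 * g ω :=
    .of_forall fun ω => Real.exp_mul_le_of_abs_le_half hα (D ω)
  filter_upwards [condExp_mono hintα hmajor hpointwise,
    condExp_const_add_mul_add_mul hm' 1 α (α ^ 2 / 2) hD hint2, hcentered, hbound]
    with ω hmono hlin hzero hmoment
  calc μ[fun ω => Real.exp (α * D ω)|m'] ω ≤ 1 + α * 0 + α ^ 2 / 2 * μ[g|m'] ω := by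
        rwa [hlin, hzero] at hmono
    _ ≤ 1 + B * α ^ 2 := by nlinarith [sq_nonneg α]
    _ ≤ Real.exp (B * α ^ 2) := by linarith [Real.add_one_le_exp (B * α ^ 2)]

theorem condexp_mgf_bound {Ω : Type*} {m0 : MeasurableSpace Ω}
    (μ : Measure Ω) [IsProbabilityMeasure μ]
    (m' : MeasurableSpace Ω) (hm' : m' ≤ m0)
    (B δ : ℝ) (hB : 0 < B) (hδ : 0 < δ)
    (D : Ω → ℝ) (hD : Integrable D μ)
    (hcentered : μ[D|m'] =ᵐ[μ] fun _ => (0 : ℝ))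
    (hint2 : Integrable (fun ω => |D ω| ^ 2 * Real.exp (δ * |D ω| / 2)) μ)
    (hbound : μ[fun ω => |D ω| ^ 2 * Real.exp (δ * |D ω| / 2)|m'] ≤ᵐ[μ] fun _ => 2 * B)
    (α : ℝ) (hα : |α| ≤ δ / 2)
    (hintα : Integrable (fun ω => Real.exp (α * D ω)) μ) :
    μ[fun ω => Real.exp (α * D ω)|m'] ≤ᵐ[μ] fun _ => Real.exp (B * α ^ 2) :=
  condexp_mgf_bound_general μ m' hm' B δ D hD hcentered hint2 hbound α hα hintα
end
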